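/- arXiv:1210.6492 — 2 statements merged into one kernel-verified Lean document; each statement's English description precedes it below -/
import Mathlib

section
/- A stochastic matrix with all entries strictly positive has exactly one eigenvalue equal to 1, and all other eigenvalues have absolute value strictly less than 1. -/
/-!
Let `P` act on `ℂⁿ` and let `i` be a coordinate where `|v i|` is maximal. Row `i` of `P v` is a
convex combination of the `v j` with positive weights, so `|(P v) i| ≤ |v i|`; since `ℂ` is
strictly convex, equality forces all `v j` to coincide. Hence every eigenvalue of modulus `1` has
a constant eigenvector and equals `1`, and the eigenspace of `1` is spanned by the constant
vector. There is no Jordan block at `1`: if `P x = x + c • 1`, the real parts of `conj c • x`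
would increase by `|c|²` under an averaging operator, impossible at their maximum. So the
generalized eigenspace of `1` is one-dimensional, which is the algebraic multiplicity.
-/

open Finset Matrix Module.End

section StrictConvexSpace

variable {ι V : Type*} [Fintype ι] [NormedAddCommGroup V] [NormedSpace ℝ V]
  [StrictConvexSpace ℝ V]

theorem eq_of_norm_le_norm_sum_smul {w : ι → ℝ} {z : ι → V} (hw₀ : ∀ i, 0 < w i)
    (hw₁ : ∑ i, w i = 1) (hz : ∀ i, ‖z i‖ ≤ ‖∑ i, w i • z i‖) (i j : ι) : z i = z j := by
  by_contra hij
  exact (norm_sum_lt_of_strictConvexSpace (fun k _ ↦ (hw₀ k).le) hw₁ (mem_univ i) (mem_univ j)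
    hij (hw₀ i).ne' (hw₀ j).ne' fun k _ ↦ hz k).false

end StrictConvexSpace

namespace Matrix

variable {ι : Type*} [Fintype ι] {P : Matrix ι ι ℝ}

theorem map_ofReal_mulVec_apply (P : Matrix ι ι ℝ) (v : ι → ℂ) (i : ι) :
    (P.map Complex.ofReal *ᵥ v) i = ∑ j, P i j • v j := by
  simp [mulVec, dotProduct, Complex.real_smul]

theorem map_ofReal_mulVec_one (hrow : ∀ i, ∑ j, P i j = 1) :
    P.map Complex.ofReal *ᵥ 1 = 1 := by
  ext i
  simp [mulVec, dotProduct, ← Complex.ofReal_sum, hrow]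

theorem norm_map_ofReal_mulVec_apply_le (hnonneg : ∀ i j, 0 ≤ P i j)
    (hrow : ∀ i, ∑ j, P i j = 1) {v : ι → ℂ} {r : ℝ} (hv : ∀ j, ‖v j‖ ≤ r) (i : ι) :
    ‖(P.map Complex.ofReal *ᵥ v) i‖ ≤ r :=
  calc ‖(P.map Complex.ofReal *ᵥ v) i‖ = ‖∑ j, P i j • v j‖ := by
        rw [map_ofReal_mulVec_apply]
    _ ≤ ∑ j, P i j * r := norm_sum_le_of_le _ fun j _ ↦ by
        rw [norm_smul, Real.norm_of_nonneg (hnonneg i j)]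
        exact mul_le_mul_of_nonneg_left (hv j) (hnonneg i j)
    _ = r := by rw [← sum_mul, hrow, one_mul]

theorem eq_of_norm_le_norm_map_ofReal_mulVec_apply (hpos : ∀ i j, 0 < P i j)
    (hrow : ∀ i, ∑ j, P i j = 1) {v : ι → ℂ} {i : ι}
    (hv : ∀ j, ‖v j‖ ≤ ‖(P.map Complex.ofReal *ᵥ v) i‖) (j k : ι) : v j = v k := by
  rw [map_ofReal_mulVec_apply] at hv
  exact eq_of_norm_le_norm_sum_smul (hpos i) (hrow i) hv j k

theorem eq_of_map_ofReal_mulVec_eq_self (hpos : ∀ i j, 0 < P i j)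
    (hrow : ∀ i, ∑ j, P i j = 1) {v : ι → ℂ} (hv : P.map Complex.ofReal *ᵥ v = v) (j k : ι) :
    v j = v k := by
  have : Nonempty ι := ⟨j⟩
  obtain ⟨i, hi⟩ := Finite.exists_max (‖v ·‖)
  exact eq_of_norm_le_norm_map_ofReal_mulVec_apply hpos hrow (i := i) (by rwa [hv]) j k

theorem norm_lt_one_of_map_ofReal_mulVec_eq_smul (hpos : ∀ i j, 0 < P i j)
    (hrow : ∀ i, ∑ j, P i j = 1) {v : ι → ℂ} (hv₀ : v ≠ 0) {μ : ℂ}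
    (hv : P.map Complex.ofReal *ᵥ v = μ • v) (hμ : μ ≠ 1) : ‖μ‖ < 1 := by
  obtain ⟨j, hj⟩ := Function.ne_iff.1 hv₀
  have : Nonempty ι := ⟨j⟩
  obtain ⟨i, hi⟩ := Finite.exists_max (‖v ·‖)
  have hvi : 0 < ‖v i‖ := (norm_pos_iff.2 hj).trans_le (hi j)
  have hAvi : (P.map Complex.ofReal *ᵥ v) i = μ * v i := by rw [hv]; rfl
  have hle : ‖μ‖ * ‖v i‖ ≤ 1 * ‖v i‖ := by
    rw [← norm_mul, ← hAvi, one_mul]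
    exact norm_map_ofReal_mulVec_apply_le (fun i j ↦ (hpos i j).le) hrow hi i
  refine (le_of_mul_le_mul_right hle hvi).lt_of_ne fun hμ₁ ↦ hμ ?_
  have hconst : v = v i • 1 := funext fun k ↦ by
    simpa using eq_of_norm_le_norm_map_ofReal_mulVec_apply hpos hrow (i := i)
      (by rw [hAvi, norm_mul, hμ₁, one_mul]; exact hi) k i
  have hfix : μ • v = v := by rw [← hv, hconst, mulVec_smul, map_ofReal_mulVec_one hrow]
  exact (mul_eq_right₀ (norm_pos_iff.1 hvi)).1 (congrFun hfix i)

theorem eq_zero_of_map_ofReal_mulVec_eq_add_const [Nonempty ι] (hnonneg : ∀ i j, 0 ≤ P i j)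
    (hrow : ∀ i, ∑ j, P i j = 1) {x : ι → ℂ} {c : ℂ}
    (hx : P.map Complex.ofReal *ᵥ x = x + c • 1) : c = 0 := by
  set y := star c • x
  have hy : P.map Complex.ofReal *ᵥ y = y + (Complex.normSq c : ℂ) • 1 := by
    rw [mulVec_smul, hx, smul_add, smul_smul, Complex.normSq_eq_conj_mul_self]
    rfl
  obtain ⟨i, hi⟩ := Finite.exists_max (y · |>.re)
  have hsum : (y i).re + Complex.normSq c ≤ (y i).re :=
    calc (y i).re + Complex.normSq c = ((P.map Complex.ofReal *ᵥ y) i).re := by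
          simp [hy]
      _ = ∑ j, P i j * (y j).re := by simp [map_ofReal_mulVec_apply, Complex.re_sum]
      _ ≤ ∑ j, P i j * (y i).re :=
          sum_le_sum fun j _ ↦ mul_le_mul_of_nonneg_left (hi j) (hnonneg i j)
      _ = (y i).re := by rw [← sum_mul, hrow, one_mul]
  exact Complex.normSq_eq_zero.1 (le_antisymm (by linarith) (Complex.normSq_nonneg c))

theorem eigenspace_map_ofReal_mulVecLin_one [Nonempty ι] (hpos : ∀ i j, 0 < P i j)
    (hrow : ∀ i, ∑ j, P i j = 1) :
    eigenspace (P.map Complex.ofReal).mulVecLin 1 = ℂ ∙ (1 : ι → ℂ) := by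
  ext v
  rw [mem_eigenspace_iff, one_smul, mulVecLin_apply, Submodule.mem_span_singleton]
  constructor
  · intro hv
    obtain ⟨i⟩ := ‹Nonempty ι›
    exact ⟨v i, funext fun j ↦ by simpa using eq_of_map_ofReal_mulVec_eq_self hpos hrow hv i j⟩
  · rintro ⟨c, rfl⟩
    rw [mulVec_smul, map_ofReal_mulVec_one hrow]

theorem maxGenEigenspace_map_ofReal_mulVecLin_one [Nonempty ι] (hpos : ∀ i j, 0 < P i j)
    (hrow : ∀ i, ∑ j, P i j = 1) :
    maxGenEigenspace (P.map Complex.ofReal).mulVecLin 1 =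
      eigenspace (P.map Complex.ofReal).mulVecLin 1 := by
  set f := (P.map Complex.ofReal).mulVecLin
  have hker_sq : ∀ x, (f - 1) ((f - 1) x) = 0 → (f - 1) x = 0 := by
    intro x hx
    have hmem : (f - 1) x ∈ eigenspace f 1 := by
      rwa [mem_eigenspace_iff, one_smul, ← sub_eq_zero]
    rw [eigenspace_map_ofReal_mulVecLin_one hpos hrow, Submodule.mem_span_singleton] at hmem
    obtain ⟨c, hc⟩ := hmem
    have hx' : P.map Complex.ofReal *ᵥ x = x + c • 1 := by
      rw [hc, LinearMap.sub_apply, Module.End.one_apply, mulVecLin_apply, add_sub_cancel]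
    rw [← hc, eq_zero_of_map_ofReal_mulVec_eq_add_const (fun i j ↦ (hpos i j).le) hrow hx',
      zero_smul]
  refine le_antisymm (fun x hx ↦ ?_) eigenspace_le_maxGenEigenspace
  obtain ⟨k, hk⟩ := (mem_maxGenEigenspace _ _ _).1 hx
  rw [one_smul] at hk
  suffices (f - 1) x = 0 by rwa [mem_eigenspace_iff, one_smul, ← sub_eq_zero]
  clear hx
  induction k generalizing x with
  | zero => simp_all
  | succ k ih => exact hker_sq x (ih _ (by rwa [pow_succ] at hk))

end Matrix

/-- Perron–Frobenius for positive stochastic matrices: a stochastic matrix with all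
entries strictly positive has `1` as an eigenvalue of algebraic multiplicity one,
and every other (complex) eigenvalue has absolute value strictly less than `1`. -/
theorem positive_stochastic_perron (n : ℕ) (hn : 0 < n)
    (P : Matrix (Fin n) (Fin n) ℝ)
    (hpos : ∀ i j, 0 < P i j) (hrow : ∀ i, ∑ j, P i j = 1) :
    ((P.map (Complex.ofReal)).charpoly.rootMultiplicity 1 = 1) ∧
    (∀ μ : ℂ, (P.map (Complex.ofReal)).charpoly.IsRoot μ → μ ≠ 1 → ‖μ‖ < 1) := by
  have : Nonempty (Fin n) := ⟨⟨0, hn⟩⟩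
  rw [← charpoly_mulVecLin]
  refine ⟨?_, fun μ hμ hμ₁ ↦ ?_⟩
  · rw [← LinearMap.finrank_maxGenEigenspace_eq,
      maxGenEigenspace_map_ofReal_mulVecLin_one hpos hrow,
      eigenspace_map_ofReal_mulVecLin_one hpos hrow, finrank_span_singleton one_ne_zero]
  · obtain ⟨v, hv⟩ := ((hasEigenvalue_iff_isRoot_charpoly _ _).2 hμ).exists_hasEigenvector
    exact norm_lt_one_of_map_ofReal_mulVec_eq_smul hpos hrow hv.2 hv.apply_eq_smul hμ₁
end

section
/- Let u_1,...,u_n (n ≥ 3) be i.i.d. real random variables with u_i ≠ 0 almost surely and E(u_i^4), E(u_i^8), E(1/u_i^4), E(1/u_i^8) all finite. Let M be the entrywise square of the Householder matrix built from u/||u||_2. Then E(||M - I||_F^2) ≤ (16n/(n-1)^4) E(1/u_1^8) E(u_1^8) + (16n/(n-1)^2) E(1/u_1^4) E(u_1^4) + (16n(n-1)/(n-2)^4) E(1/u_1^8) (E(u_1^4))^2, and consequently E(||M - I||_F) → 0 as n → ∞. -/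
open MeasureTheory ProbabilityTheory Filter

/-- The entrywise square of the Householder matrix `I - 2vvᵀ` built from `v = u/‖u‖₂`. -/
noncomputable def householderSq (n : ℕ) (u : Fin n → ℝ) : Matrix (Fin n) (Fin n) ℝ :=
  Matrix.of fun i j =>
    (((1 : Matrix (Fin n) (Fin n) ℝ) -
        (2 : ℝ) • Matrix.vecMulVec (fun k => u k / Real.sqrt (∑ l, u l ^ 2))
          (fun k => u k / Real.sqrt (∑ l, u l ^ 2))) i j) ^ 2

/-- The squared Frobenius norm of a matrix. -/
noncomputable def frobSq {n : ℕ} (A : Matrix (Fin n) (Fin n) ℝ) : ℝ :=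
  ∑ i, ∑ j, (A i j) ^ 2

/-!
Write `S = ∑ₗ uₗ²`. The diagonal entries of `M - I` are `4t² - 4t` with `t = uᵢ²/S ∈ [0, 1]`, and
the off-diagonal ones are `4uᵢ²uⱼ²/S²`, so `‖M - I‖_F²` is at most a sum of terms `16uᵢ⁴/S²` and
`16uᵢ⁴uⱼ⁴/S⁴`. Jensen's inequality for `x ↦ x⁻ᵏ` bounds `1/S^k` by `(∑_{l ∈ L} u_l^{-2k})/|L|^{k+1}`
for any index set `L`; taking `L` to avoid `i` (resp. `i` and `j`) turns each term into a sum of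
monomials in independent variables, whose expectations factor. The resulting bound on
`E‖M - I‖_F²` is `O(1/n)`, and `E‖M - I‖_F ≤ √(E‖M - I‖_F²)` by Jensen again.
-/

open Finset

lemma one_div_sum_pow_le {ι : Type*} {s : Finset ι} (hs : s.Nonempty) {a : ι → ℝ}
    (ha : ∀ i ∈ s, 0 < a i) (k : ℕ) :
    1 / (∑ i ∈ s, a i) ^ k ≤ (∑ i ∈ s, 1 / a i ^ k) / (#s : ℝ) ^ (k + 1) := by
  have hm : (0 : ℝ) < #s := by exact_mod_cast hs.card_pos
  have hjensen := Real.zpow_arith_mean_le_arith_mean_zpow (s := s) (fun _ => (#s : ℝ)⁻¹) a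
    (fun _ _ => by positivity) (by simp [hm.ne']) ha (-k)
  simp only [zpow_neg, zpow_natCast, ← mul_sum, mul_pow, mul_inv, inv_pow, inv_inv]
    at hjensen
  simp only [one_div]
  rw [le_div_iff₀ (by positivity)]
  calc ((∑ i ∈ s, a i) ^ k)⁻¹ * (#s : ℝ) ^ (k + 1)
      = #s * ((#s : ℝ) ^ k * ((∑ i ∈ s, a i) ^ k)⁻¹) := by ring
    _ ≤ #s * ((#s : ℝ)⁻¹ * ∑ i ∈ s, (a i ^ k)⁻¹) := by gcongr
    _ = ∑ i ∈ s, (a i ^ k)⁻¹ := by field_simp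

lemma one_div_sum_sq_pow_le {ι : Type*} [Fintype ι] {s : Finset ι} (hs : s.Nonempty)
    {w : ι → ℝ} (hw : ∀ l ∈ s, w l ≠ 0) (k : ℕ) :
    1 / (∑ l, w l ^ 2) ^ k ≤ (∑ l ∈ s, 1 / w l ^ (2 * k)) / (#s : ℝ) ^ (k + 1) := by
  have hpos : ∀ l ∈ s, 0 < w l ^ 2 := fun l hl => by positivity [hw l hl]
  calc 1 / (∑ l, w l ^ 2) ^ k ≤ 1 / (∑ l ∈ s, w l ^ 2) ^ k :=
        one_div_le_one_div_of_le (pow_pos (sum_pos hpos hs) k) <| pow_le_pow_left₀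
          (sum_nonneg fun l hl => (hpos l hl).le)
          (sum_le_univ_sum_of_nonneg fun l => sq_nonneg (w l)) k
    _ ≤ (∑ l ∈ s, 1 / (w l ^ 2) ^ k) / (#s : ℝ) ^ (k + 1) := one_div_sum_pow_le hs hpos k
    _ = (∑ l ∈ s, 1 / w l ^ (2 * k)) / (#s : ℝ) ^ (k + 1) := by simp only [pow_mul]

lemma cast_card_compl_singleton {ι : Type*} [Fintype ι] [DecidableEq ι] (i : ι) :
    (#({i}ᶜ : Finset ι) : ℝ) = Fintype.card ι - 1 := by
  rw [card_compl, Nat.cast_sub (card_le_univ _), card_singleton, Nat.cast_one]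

lemma cast_card_compl_pair {ι : Type*} [Fintype ι] [DecidableEq ι] {i j : ι} (hij : i ≠ j) :
    (#({i, j}ᶜ : Finset ι) : ℝ) = Fintype.card ι - 2 := by
  rw [card_compl, Nat.cast_sub (card_le_univ _), card_pair hij, Nat.cast_two]

section Expectation

variable {Ω ι κ : Type*} [MeasurableSpace Ω] {μ : Measure Ω} {W : ι → Ω → ℝ} {X : Ω → ℝ}

lemma integrable_finset_sum_and_integral_eq {s : Finset κ} {F : κ → Ω → ℝ} {c : ℝ}
    (h : ∀ k ∈ s, Integrable (F k) μ ∧ ∫ ω, F k ω ∂μ = c) :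
    Integrable (fun ω => ∑ k ∈ s, F k ω) μ ∧ ∫ ω, ∑ k ∈ s, F k ω ∂μ = #s * c := by
  refine ⟨integrable_finsetSum s fun k hk => (h k hk).1, ?_⟩
  rw [integral_finsetSum s fun k hk => (h k hk).1, sum_congr rfl fun k hk => (h k hk).2,
    sum_const, nsmul_eq_mul]

lemma ProbabilityTheory.IdentDistrib.integrable_comp_and_integral_comp_eq {Y : Ω → ℝ}
    (hY : IdentDistrib Y X μ μ) {f : ℝ → ℝ}
    (hf : Measurable f) (hfX : Integrable (fun ω => f (X ω)) μ) :
    Integrable (fun ω => f (Y ω)) μ ∧ ∫ ω, f (Y ω) ∂μ = ∫ ω, f (X ω) ∂μ :=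
  ⟨(hY.comp hf).integrable_iff.mpr hfX, (hY.comp hf).integral_eq⟩

lemma integral_sqrt_le_sqrt_integral [IsProbabilityMeasure μ] {f : Ω → ℝ}
    (hf0 : ∀ᵐ ω ∂μ, 0 ≤ f ω) (hfi : Integrable f μ) :
    ∫ ω, √(f ω) ∂μ ≤ √(∫ ω, f ω ∂μ) := by
  have hsqrt_le (x : ℝ) (hx : 0 ≤ x) : √x ≤ x + 1 := by
    nlinarith [Real.sq_sqrt hx, Real.sqrt_nonneg x]
  have hsqrti : Integrable (fun ω => √(f ω)) μ :=
    (hfi.add (integrable_const 1)).mono'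
      (Real.continuous_sqrt.comp_aestronglyMeasurable hfi.aestronglyMeasurable)
      (hf0.mono fun ω h => by
        rw [Real.norm_of_nonneg (Real.sqrt_nonneg _)]; exact hsqrt_le _ h)
  exact Real.strictConcaveOn_sqrt.concaveOn.le_map_integral Real.continuous_sqrt.continuousOn
    isClosed_Ici hf0 hfi hsqrti

variable (hind : iIndepFun W μ) (hid : ∀ i, IdentDistrib (W i) X μ μ)
include hind hid

lemma integrable_and_integral_comp_mul_comp_of_iIndepFun {f g : ℝ → ℝ} (hf : Measurable f)
    (hg : Measurable g) (hfX : Integrable (fun ω => f (X ω)) μ)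
    (hgX : Integrable (fun ω => g (X ω)) μ)
    {i j : ι} (hij : i ≠ j) :
    Integrable (fun ω => f (W i ω) * g (W j ω)) μ ∧
      ∫ ω, f (W i ω) * g (W j ω) ∂μ = (∫ ω, f (X ω) ∂μ) * ∫ ω, g (X ω) ∂μ := by
  have hindep : IndepFun (fun ω => f (W i ω)) (fun ω => g (W j ω)) μ :=
    (hind.indepFun hij).comp hf hg
  obtain ⟨hfi, hfE⟩ := (hid i).integrable_comp_and_integral_comp_eq hf hfX
  obtain ⟨hgi, hgE⟩ := (hid j).integrable_comp_and_integral_comp_eq hg hgX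
  refine ⟨hindep.integrable_mul hfi hgi, ?_⟩
  rw [hindep.integral_fun_mul_eq_mul_integral hfi.1 hgi.1, hfE, hgE]

lemma integrable_and_integral_comp_mul_comp_mul_comp_of_iIndepFun {f g h : ℝ → ℝ}
    (hf : Measurable f) (hg : Measurable g) (hh : Measurable h)
    (hfX : Integrable (fun ω => f (X ω)) μ) (hgX : Integrable (fun ω => g (X ω)) μ)
    (hhX : Integrable (fun ω => h (X ω)) μ)
    {i j l : ι} (hij : i ≠ j) (hil : i ≠ l) (hjl : j ≠ l) :
    Integrable (fun ω => f (W i ω) * g (W j ω) * h (W l ω)) μ ∧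
      ∫ ω, f (W i ω) * g (W j ω) * h (W l ω) ∂μ =
        (∫ ω, f (X ω) ∂μ) * (∫ ω, g (X ω) ∂μ) * ∫ ω, h (X ω) ∂μ := by
  have hindep : IndepFun (fun ω => f (W i ω) * g (W j ω)) (fun ω => h (W l ω)) μ :=
    (hind.indepFun_prodMk₀ (fun k => (hid k).aemeasurable_fst) i j l hil hjl).comp
      (φ := fun p : ℝ × ℝ => f p.1 * g p.2) (by fun_prop) hh
  obtain ⟨hfgi, hfgE⟩ :=
    integrable_and_integral_comp_mul_comp_of_iIndepFun hind hid hf hg hfX hgX hij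
  obtain ⟨hhi, hhE⟩ := (hid l).integrable_comp_and_integral_comp_eq hh hhX
  refine ⟨hindep.integrable_mul hfgi hhi, ?_⟩
  rw [hindep.integral_fun_mul_eq_mul_integral hfgi.1 hhi.1, hfgE, hhE]

end Expectation

section Householder

variable {n : ℕ}

lemma householderSq_sub_one_apply (w : Fin n → ℝ) (i j : Fin n) :
    (householderSq n w - 1) i j =
      ((1 : Matrix (Fin n) (Fin n) ℝ) i j - 2 * (w i * w j / ∑ l, w l ^ 2)) ^ 2 -
        (1 : Matrix (Fin n) (Fin n) ℝ) i j := by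
  simp only [householderSq, Matrix.sub_apply, Matrix.of_apply, Matrix.smul_apply,
    Matrix.vecMulVec_apply, smul_eq_mul, div_mul_div_comm,
    Real.mul_self_sqrt (sum_nonneg fun l _ => sq_nonneg (w l))]

lemma sq_householderSq_sub_one_apply_self_le (w : Fin n → ℝ) (i : Fin n) :
    ((householderSq n w - 1) i i) ^ 2 ≤ 16 * w i ^ 4 / (∑ l, w l ^ 2) ^ 2 := by
  set t := w i ^ 2 / ∑ l, w l ^ 2 with ht
  have ht0 : 0 ≤ t := by positivity
  have ht1 : t ≤ 1 := div_le_one_of_le₀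
    (single_le_sum (fun l _ => sq_nonneg (w l)) (mem_univ i)) (by positivity)
  have hentry : (householderSq n w - 1) i i = 4 * t ^ 2 - 4 * t := by
    rw [householderSq_sub_one_apply, Matrix.one_apply_eq, ht]
    ring
  calc ((householderSq n w - 1) i i) ^ 2 = 16 * t ^ 2 * (1 - t) ^ 2 := by rw [hentry]; ring
    _ ≤ 16 * t ^ 2 * 1 := by gcongr; nlinarith
    _ = 16 * w i ^ 4 / (∑ l, w l ^ 2) ^ 2 := by rw [ht]; ring

lemma sq_householderSq_sub_one_apply_of_ne (w : Fin n → ℝ) {i j : Fin n} (hij : i ≠ j) :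
    ((householderSq n w - 1) i j) ^ 2 = 16 * (w i ^ 4 * w j ^ 4) / (∑ l, w l ^ 2) ^ 4 := by
  rw [householderSq_sub_one_apply, Matrix.one_apply_ne hij]
  ring

lemma frobSq_nonneg (A : Matrix (Fin n) (Fin n) ℝ) : 0 ≤ frobSq A :=
  sum_nonneg fun _ _ => sum_nonneg fun _ _ => sq_nonneg _

lemma measurable_frobSq_householderSq_sub_one :
    Measurable fun w : Fin n → ℝ => frobSq (householderSq n w - 1) := by
  simp only [frobSq, householderSq_sub_one_apply]
  fun_prop

noncomputable def householderMajorant (n : ℕ) (w : Fin n → ℝ) : ℝ :=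
  16 / ((n : ℝ) - 1) ^ 3 * ∑ i, ∑ l ∈ {i}ᶜ, w i ^ 4 / w l ^ 4 +
    16 / ((n : ℝ) - 2) ^ 5 * ∑ i, ∑ j ∈ {i}ᶜ, ∑ l ∈ {i, j}ᶜ, w i ^ 4 * w j ^ 4 / w l ^ 8

lemma sq_householderSq_sub_one_apply_self_le_sum (hn : 2 ≤ n) {w : Fin n → ℝ}
    (hw : ∀ i, w i ≠ 0) (i : Fin n) :
    ((householderSq n w - 1) i i) ^ 2 ≤
      16 / ((n : ℝ) - 1) ^ 3 * ∑ l ∈ {i}ᶜ, w i ^ 4 / w l ^ 4 := by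
  have hcard : (#({i}ᶜ : Finset (Fin n)) : ℝ) = n - 1 := by
    rw [cast_card_compl_singleton, Fintype.card_fin]
  have hne : ({i}ᶜ : Finset (Fin n)).Nonempty := card_pos.mp <|
    (Nat.cast_pos (α := ℝ)).mp (by rw [hcard]; linarith [(Nat.ofNat_le_cast.mpr hn : (2 : ℝ) ≤ n)])
  have hS := one_div_sum_sq_pow_le hne (fun l _ => hw l) 2
  rw [hcard] at hS
  calc ((householderSq n w - 1) i i) ^ 2 ≤ 16 * w i ^ 4 * (1 / (∑ l, w l ^ 2) ^ 2) := by
        rw [mul_one_div]; exact sq_householderSq_sub_one_apply_self_le w i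
    _ ≤ 16 * w i ^ 4 * ((∑ l ∈ {i}ᶜ, 1 / w l ^ 4) / ((n : ℝ) - 1) ^ 3) := by gcongr
    _ = _ := by
        rw [mul_div_assoc', mul_sum, mul_sum, sum_div]
        exact sum_congr rfl fun l _ => by ring

lemma sq_householderSq_sub_one_apply_le_sum (hn : 3 ≤ n) {w : Fin n → ℝ}
    (hw : ∀ i, w i ≠ 0) {i j : Fin n} (hij : i ≠ j) :
    ((householderSq n w - 1) i j) ^ 2 ≤
      16 / ((n : ℝ) - 2) ^ 5 * ∑ l ∈ {i, j}ᶜ, w i ^ 4 * w j ^ 4 / w l ^ 8 := by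
  have hcard : (#({i, j}ᶜ : Finset (Fin n)) : ℝ) = n - 2 := by
    rw [cast_card_compl_pair hij, Fintype.card_fin]
  have hne : ({i, j}ᶜ : Finset (Fin n)).Nonempty := card_pos.mp <|
    (Nat.cast_pos (α := ℝ)).mp (by rw [hcard]; linarith [(Nat.ofNat_le_cast.mpr hn : (3 : ℝ) ≤ n)])
  have hS := one_div_sum_sq_pow_le hne (fun l _ => hw l) 4
  rw [hcard] at hS
  calc ((householderSq n w - 1) i j) ^ 2
      = 16 * (w i ^ 4 * w j ^ 4) * (1 / (∑ l, w l ^ 2) ^ 4) := by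
        rw [mul_one_div]; exact sq_householderSq_sub_one_apply_of_ne w hij
    _ ≤ 16 * (w i ^ 4 * w j ^ 4) * ((∑ l ∈ {i, j}ᶜ, 1 / w l ^ 8) / ((n : ℝ) - 2) ^ 5) := by
        gcongr
    _ = _ := by
        rw [mul_div_assoc', mul_sum, mul_sum, sum_div]
        exact sum_congr rfl fun l _ => by ring

lemma frobSq_householderSq_sub_one_le (hn : 3 ≤ n) {w : Fin n → ℝ} (hw : ∀ i, w i ≠ 0) :
    frobSq (householderSq n w - 1) ≤ householderMajorant n w :=
  calc frobSq (householderSq n w - 1)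
      = ∑ i, (((householderSq n w - 1) i i) ^ 2 +
          ∑ j ∈ {i}ᶜ, ((householderSq n w - 1) i j) ^ 2) :=
        sum_congr rfl fun i _ => Fintype.sum_eq_add_sum_compl i _
    _ ≤ ∑ i, (16 / ((n : ℝ) - 1) ^ 3 * ∑ l ∈ {i}ᶜ, w i ^ 4 / w l ^ 4 +
          ∑ j ∈ {i}ᶜ, 16 / ((n : ℝ) - 2) ^ 5 * ∑ l ∈ {i, j}ᶜ, w i ^ 4 * w j ^ 4 / w l ^ 8) :=
        sum_le_sum fun i _ =>
          add_le_add (sq_householderSq_sub_one_apply_self_le_sum (by omega) hw i) <|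
            sum_le_sum fun j hj => sq_householderSq_sub_one_apply_le_sum hn hw
              (Ne.symm (mem_compl.mp hj ∘ mem_singleton.mpr))
    _ = householderMajorant n w := by
        simp only [householderMajorant, sum_add_distrib, mul_sum]

variable {Ω : Type*} [MeasurableSpace Ω] {μ : Measure Ω}

lemma integrable_householderMajorant_and_integral_eq (hn : 3 ≤ n) {W : Fin n → Ω → ℝ}
    {X : Ω → ℝ} (hind : iIndepFun W μ) (hid : ∀ i, IdentDistrib (W i) X μ μ)
    (h4 : Integrable (fun ω => X ω ^ 4) μ) (hi4 : Integrable (fun ω => 1 / X ω ^ 4) μ)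
    (hi8 : Integrable (fun ω => 1 / X ω ^ 8) μ) :
    Integrable (fun ω => householderMajorant n (W · ω)) μ ∧
      ∫ ω, householderMajorant n (W · ω) ∂μ =
        16 * n / ((n : ℝ) - 1) ^ 2 * (∫ ω, 1 / X ω ^ 4 ∂μ) * (∫ ω, X ω ^ 4 ∂μ) +
        16 * n * ((n : ℝ) - 1) / ((n : ℝ) - 2) ^ 4 * (∫ ω, 1 / X ω ^ 8 ∂μ) *
          (∫ ω, X ω ^ 4 ∂μ) ^ 2 := by
  set A := ∫ ω, X ω ^ 4 ∂μ
  have m4 : Measurable fun x : ℝ => x ^ 4 := by fun_prop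
  have mi4 : Measurable fun x : ℝ => 1 / x ^ 4 := by fun_prop
  have mi8 : Measurable fun x : ℝ => 1 / x ^ 8 := by fun_prop
  have hne {i l : Fin n} {s : Finset (Fin n)} (hs : i ∈ s) (hl : l ∈ sᶜ) : i ≠ l :=
    fun h => mem_compl.mp hl (h ▸ hs)
  obtain ⟨hpairs, hpairsE⟩ : Integrable (fun ω => ∑ i, ∑ l ∈ {i}ᶜ, W i ω ^ 4 / W l ω ^ 4) μ ∧
      ∫ ω, ∑ i, ∑ l ∈ {i}ᶜ, W i ω ^ 4 / W l ω ^ 4 ∂μ =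
        n * ((n - 1) * (A * ∫ ω, 1 / X ω ^ 4 ∂μ)) := by
    have := integrable_finset_sum_and_integral_eq (μ := μ) (s := univ) fun i _ => by
      have := integrable_finset_sum_and_integral_eq (s := {i}ᶜ) fun l hl => by
        simpa only [mul_one_div] using integrable_and_integral_comp_mul_comp_of_iIndepFun
          hind hid m4 mi4 h4 hi4 (hne (mem_singleton_self i) hl)
      rwa [cast_card_compl_singleton, Fintype.card_fin] at this
    rwa [card_univ, Fintype.card_fin] at this
  obtain ⟨htriples, htriplesE⟩ : Integrable (fun ω => ∑ i, ∑ j ∈ {i}ᶜ, ∑ l ∈ {i, j}ᶜ,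
        W i ω ^ 4 * W j ω ^ 4 / W l ω ^ 8) μ ∧
      ∫ ω, ∑ i, ∑ j ∈ {i}ᶜ, ∑ l ∈ {i, j}ᶜ, W i ω ^ 4 * W j ω ^ 4 / W l ω ^ 8 ∂μ =
        n * ((n - 1) * ((n - 2) * (A * A * ∫ ω, 1 / X ω ^ 8 ∂μ))) := by
    have := integrable_finset_sum_and_integral_eq (μ := μ) (s := univ) fun i _ => by
      have := integrable_finset_sum_and_integral_eq (s := {i}ᶜ) fun j hj => by
        have hij := hne (mem_singleton_self i) hj
        have := integrable_finset_sum_and_integral_eq (s := {i, j}ᶜ) fun l hl => by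
          simpa only [mul_one_div] using
            integrable_and_integral_comp_mul_comp_mul_comp_of_iIndepFun hind hid m4 m4 mi8
              h4 h4 hi8 hij (hne (mem_insert_self i {j}) hl)
              (hne (mem_insert_of_mem (mem_singleton_self j)) hl)
        rwa [cast_card_compl_pair hij, Fintype.card_fin] at this
      rwa [cast_card_compl_singleton, Fintype.card_fin] at this
    rwa [card_univ, Fintype.card_fin] at this
  have h3 : (3 : ℝ) ≤ n := by exact_mod_cast hn
  have hn1 : (n : ℝ) - 1 ≠ 0 := by linarith
  have hn2 : (n : ℝ) - 2 ≠ 0 := by linarith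
  refine ⟨(hpairs.const_mul _).add (htriples.const_mul _), ?_⟩
  simp only [householderMajorant]
  rw [integral_add (hpairs.const_mul _) (htriples.const_mul _), integral_const_mul,
    integral_const_mul, hpairsE, htriplesE]
  field_simp

lemma integrable_frobSq_and_integral_le (hn : 3 ≤ n) {W : Fin n → Ω → ℝ}
    {X : Ω → ℝ} (hind : iIndepFun W μ) (hid : ∀ i, IdentDistrib (W i) X μ μ)
    (hX0 : ∀ᵐ ω ∂μ, X ω ≠ 0) (h4 : Integrable (fun ω => X ω ^ 4) μ)
    (hi4 : Integrable (fun ω => 1 / X ω ^ 4) μ) (hi8 : Integrable (fun ω => 1 / X ω ^ 8) μ) :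
    Integrable (fun ω => frobSq (householderSq n (W · ω) - 1)) μ ∧
      ∫ ω, frobSq (householderSq n (W · ω) - 1) ∂μ ≤
        16 * n / ((n : ℝ) - 1) ^ 2 * (∫ ω, 1 / X ω ^ 4 ∂μ) * (∫ ω, X ω ^ 4 ∂μ) +
        16 * n * ((n : ℝ) - 1) / ((n : ℝ) - 2) ^ 4 * (∫ ω, 1 / X ω ^ 8 ∂μ) *
          (∫ ω, X ω ^ 4 ∂μ) ^ 2 := by
  obtain ⟨hGi, hGE⟩ := integrable_householderMajorant_and_integral_eq hn hind hid h4 hi4 hi8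
  have hW0 : ∀ᵐ ω ∂μ, ∀ i, W i ω ≠ 0 :=
    ae_all_iff.mpr fun i => (hid i).symm.ae_snd (measurableSet_singleton 0).compl hX0
  have hFG : ∀ᵐ ω ∂μ, frobSq (householderSq n (W · ω) - 1) ≤ householderMajorant n (W · ω) :=
    hW0.mono fun ω hω => frobSq_householderSq_sub_one_le hn hω
  have hFm : AEStronglyMeasurable (fun ω => frobSq (householderSq n (W · ω) - 1)) μ :=
    (measurable_frobSq_householderSq_sub_one.comp_aemeasurable
      (aemeasurable_pi_lambda _ fun i => (hid i).aemeasurable_fst)).aestronglyMeasurable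
  have hFi : Integrable (fun ω => frobSq (householderSq n (W · ω) - 1)) μ :=
    hGi.mono' hFm (hFG.mono fun ω h => by rwa [Real.norm_of_nonneg (frobSq_nonneg _)])
  exact ⟨hFi, hGE ▸ integral_mono_ae hFi hGi hFG⟩

lemma householder_bound_le_div (hn : 3 ≤ n) {a b c : ℝ} (ha : 0 ≤ a) (hb : 0 ≤ b) (hc : 0 ≤ c) :
    16 * n / ((n : ℝ) - 1) ^ 2 * b * a + 16 * n * ((n : ℝ) - 1) / ((n : ℝ) - 2) ^ 4 * c * a ^ 2 ≤
      (64 * b * a + 432 * c * a ^ 2) / n := by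
  have h3 : (3 : ℝ) ≤ n := by exact_mod_cast hn
  have hpairs : 16 * n / ((n : ℝ) - 1) ^ 2 ≤ 64 / n := by
    rw [div_le_div_iff₀ (by nlinarith) (by linarith)]
    nlinarith
  have htriples : 16 * n * ((n : ℝ) - 1) / ((n : ℝ) - 2) ^ 4 ≤ 432 / n := by
    have : (0 : ℝ) < n - 2 := by linarith
    rw [div_le_div_iff₀ (by positivity) (by linarith)]
    have h3' : (0 : ℝ) ≤ n - 3 := by linarith
    nlinarith [sq_nonneg ((n : ℝ) - 3), mul_nonneg (mul_nonneg h3' h3') h3']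
  calc _ ≤ 64 / n * b * a + 432 / n * c * a ^ 2 := by gcongr
    _ = _ := by ring

end Householder

theorem householder_expected_frobenius_general
    {Ω : Type*} [MeasurableSpace Ω] (μ : Measure Ω) [IsProbabilityMeasure μ]
    (X : Ω → ℝ)
    (hX0 : ∀ᵐ ω ∂μ, X ω ≠ 0)
    (h4 : Integrable (fun ω => X ω ^ 4) μ)
    (hi4 : Integrable (fun ω => 1 / X ω ^ 4) μ)
    (hi8 : Integrable (fun ω => 1 / X ω ^ 8) μ)
    (u : (n : ℕ) → Fin n → Ω → ℝ)
    (hindep : ∀ n, iIndepFun (u n) μ)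
    (hident : ∀ n i, IdentDistrib (u n i) X μ μ) :
    (∀ n, 3 ≤ n →
      ∫ ω, frobSq (householderSq n (fun i => u n i ω) - 1) ∂μ ≤
        (16 * n / ((n : ℝ) - 1) ^ 4) * (∫ ω, 1 / X ω ^ 8 ∂μ) * (∫ ω, X ω ^ 8 ∂μ) +
        (16 * n / ((n : ℝ) - 1) ^ 2) * (∫ ω, 1 / X ω ^ 4 ∂μ) * (∫ ω, X ω ^ 4 ∂μ) +
        (16 * n * ((n : ℝ) - 1) / ((n : ℝ) - 2) ^ 4) * (∫ ω, 1 / X ω ^ 8 ∂μ) *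
          (∫ ω, X ω ^ 4 ∂μ) ^ 2) ∧
    Tendsto (fun n => ∫ ω, Real.sqrt (frobSq (householderSq n (fun i => u n i ω) - 1)) ∂μ)
      atTop (nhds 0) := by
  have hbound {n : ℕ} (hn : 3 ≤ n) :=
    integrable_frobSq_and_integral_le hn (hindep n) (hident n) hX0 h4 hi4 hi8
  refine ⟨fun n hn => ?_, ?_⟩
  · have : 0 ≤ 16 * n / ((n : ℝ) - 1) ^ 4 * (∫ ω, 1 / X ω ^ 8 ∂μ) * (∫ ω, X ω ^ 8 ∂μ) := by
      positivity
    linarith [(hbound hn).2]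
  · have hK := (tendsto_const_div_atTop_nhds_zero_nat
      (64 * (∫ ω, 1 / X ω ^ 4 ∂μ) * (∫ ω, X ω ^ 4 ∂μ) +
        432 * (∫ ω, 1 / X ω ^ 8 ∂μ) * (∫ ω, X ω ^ 4 ∂μ) ^ 2)).sqrt
    rw [Real.sqrt_zero] at hK
    refine squeeze_zero'
      (Eventually.of_forall fun n => integral_nonneg fun ω => Real.sqrt_nonneg _) ?_ hK
    filter_upwards [eventually_ge_atTop 3] with n hn
    obtain ⟨hFi, hFE⟩ := hbound hn
    calc _ ≤ √(∫ ω, frobSq (householderSq n (fun i => u n i ω) - 1) ∂μ) :=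
          integral_sqrt_le_sqrt_integral (ae_of_all _ fun ω => frobSq_nonneg _) hFi
      _ ≤ _ := Real.sqrt_le_sqrt <| hFE.trans <| householder_bound_le_div hn
          (by positivity) (by positivity) (by positivity)

/-- If `u₁, …, uₙ` (for each `n ≥ 3`) are i.i.d. real random variables, nonzero a.s.,
with finite moments `E(u⁴), E(u⁸), E(1/u⁴), E(1/u⁸)`, and `M` is the entrywise square of
the Householder matrix built from `u/‖u‖₂`, then
`E(‖M-I‖_F²) ≤ (16n/(n-1)⁴)E(1/u⁸)E(u⁸) + (16n/(n-1)²)E(1/u⁴)E(u⁴) + (16n(n-1)/(n-2)⁴)E(1/u⁸)(E(u⁴))²`,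
and consequently `E(‖M-I‖_F) → 0` as `n → ∞`. -/
theorem householder_expected_frobenius
    {Ω : Type*} [MeasurableSpace Ω] (μ : Measure Ω) [IsProbabilityMeasure μ]
    (X : Ω → ℝ) (hX : Measurable X)
    (hX0 : ∀ᵐ ω ∂μ, X ω ≠ 0)
    (h4 : Integrable (fun ω => X ω ^ 4) μ)
    (h8 : Integrable (fun ω => X ω ^ 8) μ)
    (hi4 : Integrable (fun ω => 1 / X ω ^ 4) μ)
    (hi8 : Integrable (fun ω => 1 / X ω ^ 8) μ)
    (u : (n : ℕ) → Fin n → Ω → ℝ)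
    (hmeas : ∀ n i, Measurable (u n i))
    (hindep : ∀ n, iIndepFun (u n) μ)
    (hident : ∀ n i, IdentDistrib (u n i) X μ μ) :
    (∀ n, 3 ≤ n →
      ∫ ω, frobSq (householderSq n (fun i => u n i ω) - 1) ∂μ ≤
        (16 * n / ((n : ℝ) - 1) ^ 4) * (∫ ω, 1 / X ω ^ 8 ∂μ) * (∫ ω, X ω ^ 8 ∂μ) +
        (16 * n / ((n : ℝ) - 1) ^ 2) * (∫ ω, 1 / X ω ^ 4 ∂μ) * (∫ ω, X ω ^ 4 ∂μ) +
        (16 * n * ((n : ℝ) - 1) / ((n : ℝ) - 2) ^ 4) * (∫ ω, 1 / X ω ^ 8 ∂μ) *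
          (∫ ω, X ω ^ 4 ∂μ) ^ 2) ∧
    Tendsto (fun n => ∫ ω, Real.sqrt (frobSq (householderSq n (fun i => u n i ω) - 1)) ∂μ)
      atTop (nhds 0) :=
  householder_expected_frobenius_general μ X hX0 h4 hi4 hi8 u hindep hident
end
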